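/- arXiv:1904.10215 — 3 statements merged into one kernel-verified Lean document; each statement's English description precedes it below -/
import Mathlib

section
/- There exists a sequence S_0, S_1, …, S_n of feasible subsets of 𝒯 such that for every i ∈ {0, 1, …, n}: (1) S_i \ 𝒯_i ⊆ OPT; (2) |OPT| − |S_i| ≤ (M − 1)·|ALG_i|; and (3) S_i ∩ 𝒯_i = ALG_i. (In particular, conditions (1) and (3) together imply S_i \ ALG_i ⊆ OPT.) -/
/-!
Setting: `G` is a finite tree rooted at `r`. A family `S : Fin n → Finset V` of
vertex sets of subtrees (connected subgraphs) of `G` is given; since connected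
subgraphs of a tree are induced, a subtree is faithfully represented by its
vertex set. An *object* of the tree is a vertex or an edge. Capacities are
given by `k`, loads count the subtrees containing an object, feasibility means
no object is overloaded. The subtrees are indexed so that their roots appear
in nondecreasing order along some post-order (bottom-up) traversal of the tree,
which is encoded by an injective numbering `pos` of the vertices such that
descendants of any vertex `v` appear (contiguously) before `v`.
-/

open Finset

attribute [local instance] Classical.propDecidable

/-- An *object* of a graph on vertex type `V`: a vertex or a (potential) edge. -/
abbrev Object (V : Type) := V ⊕ Sym2 V

/-- The subtree of `G` with vertex set `s` contains the object `o`. -/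
def ContainsObj {V : Type} (G : SimpleGraph V) (s : Finset V) : Object V → Prop
  | Sum.inl v => v ∈ s
  | Sum.inr e => e ∈ G.edgeSet ∧ ∀ x ∈ e, x ∈ s

/-- The load induced by the subfamily `U` on the object `o`. -/
noncomputable def load {V : Type} {n : ℕ} (G : SimpleGraph V) (S : Fin n → Finset V)
    (U : Finset (Fin n)) (o : Object V) : ℕ :=
  (U.filter fun i => ContainsObj G (S i) o).card

/-- A subfamily of subtrees is feasible if it does not overload any object. -/
def Feasible {V : Type} {n : ℕ} (G : SimpleGraph V) (S : Fin n → Finset V)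
    (k : Object V → ℕ) (U : Finset (Fin n)) : Prop :=
  ∀ o : Object V, load G S U o ≤ k o

/-- The index set `𝒯_i` of the first `i` subtrees. -/
noncomputable def firstIdx (n i : ℕ) : Finset (Fin n) :=
  univ.filter fun j => (j : ℕ) < i

/-- `ALG_i`: the greedy solution after the first `i` subtrees have been considered. -/
noncomputable def greedy {V : Type} {n : ℕ} (G : SimpleGraph V) (S : Fin n → Finset V)
    (k : Object V → ℕ) : ℕ → Finset (Fin n)
  | 0 => ∅
  | m + 1 =>
    if h : m < n then
      if Feasible G S k (insert ⟨m, h⟩ (greedy G S k m)) then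
        insert ⟨m, h⟩ (greedy G S k m)
      else greedy G S k m
    else greedy G S k m

/-- `v` is an ancestor of `u` in the tree `G` rooted at `r`
(i.e. `v` lies on the unique `r`–`u` path). -/
def IsAnc {V : Type} (G : SimpleGraph V) (r v u : V) : Prop :=
  G.dist r u = G.dist r v + G.dist v u

/-- The number of leaves of the subtree with vertex set `s` that differ from its root `rt`. -/
noncomputable def leavesCnt {V : Type} [DecidableEq V] (G : SimpleGraph V)
    (s : Finset V) (rt : V) : ℕ :=
  (s.filter fun v => v ≠ rt ∧ (s.filter fun u => G.Adj v u).card ≤ 1).card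

/-!
Induction on `i`, keeping `OPT.card ≤ (S_i).card + (M - 1) * (ALG_i).card`. When the greedy
algorithm accepts `T_{i+1}` but `S_i` does not contain it, add `T_{i+1}` and, for each leaf `ℓ` of
`T_{i+1}`, remove one tree of `S_i \ ALG_i` containing the overloaded object farthest from the root
on the branch towards `ℓ`. That tree comes later than `T_{i+1}`, so, roots being in post-order, it
contains `root(T_{i+1})` and hence every overloaded object on that branch. At most `M` trees leave
while `ALG` grows by one.
-/

namespace SimpleGraph

variable {V : Type} {G : SimpleGraph V}

def Between (G : SimpleGraph V) (u w v : V) : Prop :=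
  G.dist u w + G.dist w v = G.dist u v

theorem Connected.between_trans (hG : G.Connected) {r a b c : V} (h₁ : G.Between r a b)
    (h₂ : G.Between r b c) : G.Between r a c ∧ G.Between a b c := by
  have := hG.dist_triangle (u := r) (v := a) (w := c)
  have := hG.dist_triangle (u := a) (v := b) (w := c)
  unfold Between at *
  omega

theorem Walk.IsPath.append {u v w : V} {p : G.Walk u v} {q : G.Walk v w} (hp : p.IsPath)
    (hq : q.IsPath) (h : ∀ x ∈ p.support, x ∈ q.support → x = v) : (p.append q).IsPath := by
  rw [isPath_def, support_append]
  refine hp.support_nodup.append hq.support_nodup.tail fun x hx hx' => ?_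
  obtain rfl := h x hx (List.mem_of_mem_tail hx')
  have hnd := hq.support_nodup
  rw [← cons_tail_support q] at hnd
  exact (List.nodup_cons.mp hnd).1 hx'

theorem exists_isPath_of_connected_induce {s : Set V} (hs : (G.induce s).Connected) {u v : V}
    (hu : u ∈ s) (hv : v ∈ s) : ∃ p : G.Walk u v, p.IsPath ∧ ∀ x ∈ p.support, x ∈ s := by
  obtain ⟨W⟩ := hs ⟨u, hu⟩ ⟨v, hv⟩
  refine ⟨_, (W.map (Embedding.induce s).toHom).bypass_isPath, fun x hx => ?_⟩
  obtain ⟨⟨y, hy⟩, -, rfl⟩ := List.mem_map.mp <|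
    Walk.support_map _ W ▸ Walk.support_bypass_subset_support _ hx
  exact hy

namespace IsTree

variable (hT : G.IsTree)
include hT

theorem length_eq_dist {u v : V} {p : G.Walk u v} (hp : p.IsPath) : p.length = G.dist u v := by
  obtain ⟨q, hq, hql⟩ := hT.connected.exists_path_of_dist u v
  obtain rfl : p = q :=
    congrArg Subtype.val <| (hT.isAcyclic.subsingleton_path u v).elim ⟨p, hp⟩ ⟨q, hq⟩
  exact hql

theorem between_of_mem_support {u v w : V} {p : G.Walk u v} (hp : p.IsPath)
    (hw : w ∈ p.support) : G.Between u w v := by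
  have hsplit := congrArg Walk.length (p.take_spec hw)
  rw [Walk.length_append] at hsplit
  have := dist_le (p.takeUntil w hw)
  have := dist_le (p.dropUntil w hw)
  have := hT.connected.dist_triangle (u := u) (v := w) (w := v)
  have := hT.length_eq_dist hp
  unfold Between
  omega

theorem mem_support_of_between {u v w : V} {p : G.Walk u v} (hp : p.IsPath)
    (h : G.Between u w v) : w ∈ p.support := by
  obtain ⟨a, -, hal⟩ := hT.connected.exists_path_of_dist u w
  obtain ⟨b, -, hbl⟩ := hT.connected.exists_path_of_dist w v
  have hab : (a.append b).IsPath := (a.append b).isPath_of_length_eq_dist <| by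
    rw [Walk.length_append, hal, hbl]; exact h
  obtain rfl : p = a.append b :=
    congrArg Subtype.val <| (hT.isAcyclic.subsingleton_path u v).elim ⟨p, hp⟩ ⟨_, hab⟩
  exact (Walk.mem_support_append_iff _ _).mpr (Or.inl a.end_mem_support)

theorem between_total {u a b x : V} (ha : G.Between u a x) (hb : G.Between u b x) :
    G.Between u a b ∨ G.Between u b a := by
  obtain ⟨p, hp, -⟩ := hT.connected.exists_path_of_dist u x
  have hmb := hT.mem_support_of_between hp hb
  have hma := hT.mem_support_of_between hp ha
  rw [← p.take_spec hmb, Walk.mem_support_append_iff] at hma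
  rcases hma with hma | hma
  · exact Or.inl (hT.between_of_mem_support (hp.takeUntil hmb) hma)
  · have := hT.between_of_mem_support (hp.dropUntil hmb) hma
    have := hT.connected.dist_triangle (u := u) (v := b) (w := a)
    unfold Between at *
    omega

theorem eq_of_between_of_dist_eq {u a b x : V} (ha : G.Between u a x) (hb : G.Between u b x)
    (h : G.dist u a = G.dist u b) : a = b := by
  rcases hT.between_total ha hb with hab | hab
  · exact hT.connected.dist_eq_zero_iff.mp (by unfold Between at hab; omega)
  · exact (hT.connected.dist_eq_zero_iff.mp (by unfold Between at hab; omega)).symm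

theorem between_or_between_of_adj (r : V) {x y : V} (h : G.Adj x y) :
    G.Between r x y ∨ G.Between r y x := by
  have := dist_eq_one_iff_adj.mpr h
  have := dist_eq_one_iff_adj.mpr h.symm
  unfold Between
  rcases hT.dist_eq_dist_add_one_of_adj r h with h' | h' <;> omega

theorem mem_of_between {s : Set V} (hs : (G.induce s).Connected) {u v w : V} (hu : u ∈ s)
    (hv : v ∈ s) (h : G.Between u w v) : w ∈ s := by
  obtain ⟨p, hp, hps⟩ := exists_isPath_of_connected_induce hs hu hv
  exact hps w (hT.mem_support_of_between hp h)

theorem between_of_forall_dist_le {s : Set V} (hs : (G.induce s).Connected) {r ρ v : V}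
    (hρ : ρ ∈ s) (hmin : ∀ v ∈ s, G.dist r ρ ≤ G.dist r v) (hv : v ∈ s) : G.Between r ρ v := by
  obtain ⟨A, hA, hAl⟩ := hT.connected.exists_path_of_dist r ρ
  obtain ⟨B, hB, hBs⟩ := exists_isPath_of_connected_induce hs hρ hv
  have hAB : (A.append B).IsPath := hA.append hB fun x hxA hxB => by
    have := hT.between_of_mem_support hA hxA
    have := hmin x (hBs x hxB)
    unfold Between at *
    exact hT.connected.dist_eq_zero_iff.mp (by omega)
  have := hT.length_eq_dist hAB
  rw [Walk.length_append, hAl, hT.length_eq_dist hB] at this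
  exact this

end IsTree

end SimpleGraph

section Load

variable {V : Type} {n : ℕ} {G : SimpleGraph V} {S : Fin n → Finset V} {k : Object V → ℕ}

theorem load_mono {U W : Finset (Fin n)} (h : U ⊆ W) (o : Object V) :
    load G S U o ≤ load G S W o :=
  card_le_card (filter_subset_filter _ h)

theorem load_insert_le (t : Fin n) (U : Finset (Fin n)) (o : Object V) :
    load G S (insert t U) o ≤ load G S U o + 1 := by
  unfold load
  rw [filter_insert]
  split_ifs
  exacts [card_insert_le _ _, Nat.le_succ _]

theorem load_insert_of_not_containsObj {t : Fin n} (U : Finset (Fin n)) {o : Object V}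
    (h : ¬ ContainsObj G (S t) o) : load G S (insert t U) o = load G S U o := by
  unfold load
  rw [filter_insert, if_neg h]

theorem load_insert_of_containsObj {t : Fin n} {U : Finset (Fin n)} {o : Object V}
    (h : ContainsObj G (S t) o) (ht : t ∉ U) : load G S (insert t U) o = load G S U o + 1 := by
  unfold load
  rw [filter_insert, if_pos h]
  exact card_insert_of_notMem fun hc => ht (mem_filter.mp hc).1

theorem exists_mem_sdiff_of_load_lt {U W : Finset (Fin n)} {o : Object V}
    (h : load G S U o < load G S W o) : ∃ j ∈ W \ U, ContainsObj G (S j) o := by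
  by_contra! hW
  refine h.not_ge (card_le_card fun j hj => ?_)
  obtain ⟨hjW, hjo⟩ := mem_filter.mp hj
  by_contra hjU
  exact hW j (mem_sdiff.mpr ⟨hjW, fun hj' => hjU (mem_filter.mpr ⟨hj', hjo⟩)⟩) hjo

theorem Feasible.mono {U W : Finset (Fin n)} (hW : Feasible G S k W) (h : U ⊆ W) :
    Feasible G S k U :=
  fun o => (load_mono h o).trans (hW o)

theorem Feasible.insert_sdiff {U D : Finset (Fin n)} (hU : Feasible G S k U) (hD : D ⊆ U)
    {t : Fin n} (hcov : ∀ o, k o < load G S (insert t U) o → ∃ j ∈ D, ContainsObj G (S j) o) :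
    Feasible G S k (insert t (U \ D)) := by
  intro o
  by_cases ho : k o < load G S (insert t U) o
  · obtain ⟨j, hjD, hjo⟩ := hcov o ho
    have hjU : load G S U o = load G S (U.erase j) o + 1 := by
      rw [← load_insert_of_containsObj hjo (notMem_erase j U), insert_erase (hD hjD)]
    have hUD : U \ D ⊆ U.erase j := fun x hx =>
      mem_erase.mpr ⟨fun h => (mem_sdiff.mp hx).2 (h ▸ hjD), (mem_sdiff.mp hx).1⟩
    calc load G S (insert t (U \ D)) o ≤ load G S (U \ D) o + 1 := load_insert_le t _ o
      _ ≤ load G S (U.erase j) o + 1 := by gcongr; exact load_mono hUD o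
      _ = load G S U o := hjU.symm
      _ ≤ k o := hU o
  · exact (load_mono (insert_subset_insert t sdiff_subset) o).trans (not_lt.mp ho)

end Load

section Greedy

variable {V : Type} {n : ℕ} {G : SimpleGraph V} {S : Fin n → Finset V} {k : Object V → ℕ}

theorem mem_firstIdx {i : ℕ} {j : Fin n} : j ∈ firstIdx n i ↔ (j : ℕ) < i := by
  simp [firstIdx]

theorem firstIdx_zero : firstIdx n 0 = ∅ := by
  ext j; simp [mem_firstIdx]

theorem firstIdx_succ {i : ℕ} (hi : i < n) :
    firstIdx n (i + 1) = insert ⟨i, hi⟩ (firstIdx n i) := by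
  ext j
  simp only [mem_firstIdx, mem_insert, Fin.ext_iff]
  omega

theorem sdiff_firstIdx_succ_subset {i : ℕ} (hi : i < n) {U U' : Finset (Fin n)}
    (h : U' ⊆ insert ⟨i, hi⟩ U) : U' \ firstIdx n (i + 1) ⊆ U \ firstIdx n i := by
  intro j hj
  obtain ⟨hjU', hjF⟩ := mem_sdiff.mp hj
  rw [firstIdx_succ hi, mem_insert, not_or] at hjF
  exact mem_sdiff.mpr ⟨(mem_insert.mp (h hjU')).resolve_left hjF.1, hjF.2⟩

theorem greedy_zero : greedy G S k 0 = ∅ := by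
  rw [greedy]

theorem greedy_succ_of_lt {i : ℕ} (hi : i < n) :
    greedy G S k (i + 1) = if Feasible G S k (insert ⟨i, hi⟩ (greedy G S k i)) then
      insert ⟨i, hi⟩ (greedy G S k i) else greedy G S k i := by
  rw [greedy, dif_pos hi]

end Greedy

theorem Finset.exists_subset_card_le_of_cover {α β ι : Type*} {B : Finset β} {L : Finset α}
    {R : Finset ι} (Q : β → α → Prop) (C : ι → β → Prop)
    (hbranch : ∀ ℓ ∈ L, (∃ b ∈ B, Q b ℓ) → ∃ j ∈ R, ∀ b ∈ B, Q b ℓ → C j b)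
    (hL : ∀ b ∈ B, ∃ ℓ ∈ L, Q b ℓ) : ∃ D ⊆ R, D.card ≤ L.card ∧ ∀ b ∈ B, ∃ j ∈ D, C j b := by
  suffices ∃ D ⊆ R, D.card ≤ L.card ∧ ∀ b ∈ B, (∃ ℓ ∈ L, Q b ℓ) → ∃ j ∈ D, C j b by
    obtain ⟨D, hDR, hDL, hD⟩ := this
    exact ⟨D, hDR, hDL, fun b hb => hD b hb (hL b hb)⟩
  clear hL
  induction L using Finset.induction_on with
  | empty => exact ⟨∅, empty_subset _, le_rfl, by simp⟩
  | insert ℓ L hℓ ih =>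
    obtain ⟨D, hDR, hDL, hD⟩ := ih fun ℓ' hℓ' => hbranch ℓ' (mem_insert_of_mem hℓ')
    rw [card_insert_of_notMem hℓ]
    by_cases hne : ∃ b ∈ B, Q b ℓ
    · obtain ⟨j, hjR, hj⟩ := hbranch ℓ (mem_insert_self ℓ L) hne
      refine ⟨insert j D, insert_subset hjR hDR, (card_insert_le j D).trans (by omega), ?_⟩
      rintro b hb ⟨ℓ', hℓ', hQ⟩
      rcases mem_insert.mp hℓ' with rfl | hℓ'
      · exact ⟨j, mem_insert_self j D, hj b hb hQ⟩
      · obtain ⟨j', hj'D, hj'⟩ := hD b hb ⟨ℓ', hℓ', hQ⟩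
        exact ⟨j', mem_insert_of_mem hj'D, hj'⟩
    · refine ⟨D, hDR, by omega, ?_⟩
      rintro b hb ⟨ℓ', hℓ', hQ⟩
      rcases mem_insert.mp hℓ' with rfl | hℓ'
      · exact absurd ⟨b, hb, hQ⟩ hne
      · exact hD b hb ⟨ℓ', hℓ', hQ⟩

namespace SimpleGraph

variable {V : Type} {G : SimpleGraph V}

noncomputable def leafSet [DecidableEq V] (G : SimpleGraph V) (s : Finset V) (ρ : V) : Finset V :=
  s.filter fun v => v ≠ ρ ∧ (s.filter fun u => G.Adj v u).card ≤ 1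

namespace IsTree

variable (hT : G.IsTree) {r : V}
include hT

theorem root_mem_of_mem_inter {s s' : Set V} (hs' : (G.induce s').Connected) {ρ ρ' x : V}
    (hρ' : ρ' ∈ s') (hroot : ∀ v ∈ s, G.Between r ρ v) (hroot' : ∀ v ∈ s', G.Between r ρ' v)
    (hanc : G.Between r ρ ρ' → ρ = ρ') (hx : x ∈ s) (hx' : x ∈ s') : ρ ∈ s' := by
  rcases hT.between_total (hroot x hx) (hroot' x hx') with h | h
  · exact hanc h ▸ hρ'
  · exact hT.mem_of_between hs' hρ' hx' (hT.connected.between_trans h (hroot x hx)).2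

theorem exists_mem_leafSet_between [DecidableEq V] {s : Finset V} {ρ : V}
    (hroot : ∀ v ∈ s, G.Between r ρ v)
    (hleaf : 1 ≤ (G.leafSet s ρ).card) {v : V} (hv : v ∈ s) :
    ∃ ℓ ∈ G.leafSet s ρ, G.Between ρ v ℓ := by
  by_cases hvρ : v = ρ
  · obtain ⟨ℓ, hℓ⟩ := card_pos.mp hleaf
    exact ⟨ℓ, hℓ, by simp [hvρ, Between]⟩
  -- a descendant of `v` in `s` farthest from the root is a leaf
  obtain ⟨ℓ, hℓ, hmax⟩ := (s.filter (G.Between r v ·)).exists_max_image (G.dist r ·)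
    ⟨v, mem_filter.mpr ⟨hv, by simp [Between]⟩⟩
  obtain ⟨hℓs, hvℓ⟩ := mem_filter.mp hℓ
  have hρv := hroot v hv
  have hdρv : G.dist ρ v ≠ 0 := fun h => hvρ (hT.connected.dist_eq_zero_iff.mp h).symm
  have hparent : ∀ u ∈ s.filter (G.Adj ℓ ·), G.Between r u ℓ ∧ G.dist r u + 1 = G.dist r ℓ := by
    intro u hu
    obtain ⟨hus, hadj⟩ := mem_filter.mp hu
    have := dist_eq_one_iff_adj.mpr hadj
    have := dist_eq_one_iff_adj.mpr hadj.symm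
    rcases hT.between_or_between_of_adj r hadj with h | h
    · have := hmax u (mem_filter.mpr ⟨hus, (hT.connected.between_trans hvℓ h).1⟩)
      unfold Between at h
      omega
    · unfold Between at h
      exact ⟨h, by omega⟩
  refine ⟨ℓ, mem_filter.mpr ⟨hℓs, ?_, card_le_one.mpr fun a ha b hb => ?_⟩,
    (hT.connected.between_trans hρv hvℓ).2⟩
  · rintro rfl
    unfold Between at hρv hvℓ
    omega
  · exact hT.eq_of_between_of_dist_eq (hparent a ha).1 (hparent b hb).1
      (by have := (hparent a ha).2; have := (hparent b hb).2; omega)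

/-- The witness `b` is the vertex of `o` farthest from `r`. -/
theorem exists_bottom {s : Finset V} {ρ : V} (hroot : ∀ v ∈ s, G.Between r ρ v) {o : Object V}
    (ho : ContainsObj G s o) :
    ∃ b : V, (∀ s', ContainsObj G s' o → b ∈ s') ∧
      ∀ s' : Finset V, (G.induce (s' : Set V)).Connected → ρ ∈ s' → b ∈ s' →
        ContainsObj G s' o := by
  have hedge : ∀ x y, G.Adj x y → x ∈ s → y ∈ s → G.Between r x y →
      ∀ s' : Finset V, (G.induce (s' : Set V)).Connected → ρ ∈ s' → y ∈ s' →
        ContainsObj G s' (Sum.inr s(x, y)) := by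
    intro x y hadj hx hy hxy s' hs' hρ hy'
    have hx' : x ∈ s' := hT.mem_of_between hs' hρ hy' <| by
      have := hroot x hx
      have := hroot y hy
      unfold Between at *
      omega
    refine ⟨hadj, fun z hz => ?_⟩
    rcases Sym2.mem_iff.mp hz with rfl | rfl
    exacts [hx', hy']
  match o, ho with
  | Sum.inl v, _ => exact ⟨v, fun _ h => h, fun _ _ _ h => h⟩
  | Sum.inr e, ho =>
    induction e using Sym2.ind with
    | _ x y =>
      obtain ⟨hadj, hxy⟩ := ho
      have hx := hxy x (Sym2.mem_mk_left x y)
      have hy := hxy y (Sym2.mem_mk_right x y)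
      rcases hT.between_or_between_of_adj r hadj with h | h
      · exact ⟨y, fun _ h' => h'.2 y (Sym2.mem_mk_right x y), hedge x y hadj hx hy h⟩
      · rw [Sym2.eq_swap]
        exact ⟨x, fun _ h' => h'.2 x (Sym2.mem_mk_right y x), hedge y x hadj.symm hy hx h⟩

/-- Take the set covering the point of `B` on the branch that is farthest from `ρ`. -/
theorem exists_mem_forall_between {ι : Type*} {T : ι → Set V} {R : Finset ι}
    (hconn : ∀ j ∈ R, (G.induce (T j)).Connected) {B : Finset V} {ρ ℓ : V}
    (hcov : ∀ b ∈ B, ∃ j ∈ R, b ∈ T j ∧ ρ ∈ T j) (hne : ∃ b ∈ B, G.Between ρ b ℓ) :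
    ∃ j ∈ R, ∀ b ∈ B, G.Between ρ b ℓ → b ∈ T j := by
  obtain ⟨b₀, hb₀, hmax⟩ := (B.filter (G.Between ρ · ℓ)).exists_max_image (G.dist ρ ·)
    (by obtain ⟨b, hb, hbℓ⟩ := hne; exact ⟨b, mem_filter.mpr ⟨hb, hbℓ⟩⟩)
  obtain ⟨hb₀B, hb₀ℓ⟩ := mem_filter.mp hb₀
  obtain ⟨j, hjR, hb₀j, hρj⟩ := hcov b₀ hb₀B
  refine ⟨j, hjR, fun b hb hbℓ => ?_⟩
  have hle := hmax b (mem_filter.mpr ⟨hb, hbℓ⟩)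
  rcases hT.between_total hbℓ hb₀ℓ with h | h
  · exact hT.mem_of_between (hconn j hjR) hρj hb₀j h
  · obtain rfl : b₀ = b := hT.connected.dist_eq_zero_iff.mp (by unfold Between at h; omega)
    exact hb₀j

end IsTree

end SimpleGraph

section Exchange

variable {V : Type} [DecidableEq V] {n : ℕ} {G : SimpleGraph V} {S : Fin n → Finset V}
  {k : Object V → ℕ}

theorem exists_feasible_exchange (hT : G.IsTree) {r : V}
    (hsub : ∀ i, (G.induce (S i : Set V)).Connected) {t : Fin n} {ρ : V}
    (hroot : ∀ v ∈ S t, G.Between r ρ v) (hleaf : 1 ≤ leavesCnt G (S t) ρ)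
    {g U : Finset (Fin n)} (hU : Feasible G S k U) (hgU : g ⊆ U) (htU : t ∉ U)
    (hg : Feasible G S k (insert t g)) (hlater : ∀ j ∈ U \ g, ∀ x ∈ S t, x ∈ S j → ρ ∈ S j) :
    ∃ D ⊆ U \ g, D.card ≤ leavesCnt G (S t) ρ ∧ Feasible G S k (insert t (U \ D)) := by
  have hover : ∀ o, k o < load G S (insert t U) o →
      ContainsObj G (S t) o ∧ ∃ j ∈ U \ g, ContainsObj G (S j) o := by
    intro o ho
    have hto : ContainsObj G (S t) o := by
      by_contra h
      rw [load_insert_of_not_containsObj U h] at ho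
      exact ho.not_ge (hU o)
    refine ⟨hto, exists_mem_sdiff_of_load_lt ?_⟩
    have := load_insert_of_containsObj hto fun h => htU (hgU h)
    have := load_insert_le (G := G) (S := S) t U o
    have := hg o
    omega
  set B := (S t).filter fun b =>
    ∃ o, k o < load G S (insert t U) o ∧ ∀ s, ContainsObj G s o → b ∈ s
  have hBcov : ∀ b ∈ B, ∃ j ∈ U \ g, b ∈ (S j : Set V) ∧ ρ ∈ (S j : Set V) := by
    intro b hb
    obtain ⟨hbt, o, ho, hbo⟩ := mem_filter.mp hb
    obtain ⟨j, hj, hjo⟩ := (hover o ho).2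
    exact ⟨j, hj, hbo _ hjo, hlater j hj b hbt (hbo _ hjo)⟩
  obtain ⟨D, hD, hDcard, hDcov⟩ :=
    exists_subset_card_le_of_cover (G.Between ρ) (fun j b => b ∈ (S j : Set V))
      (fun _ _ hne => hT.exists_mem_forall_between (fun j _ => hsub j) hBcov hne)
      (fun b hb => hT.exists_mem_leafSet_between hroot hleaf (mem_filter.mp hb).1)
  refine ⟨D, hD, hDcard, hU.insert_sdiff (hD.trans sdiff_subset) fun o ho => ?_⟩
  obtain ⟨hto, -⟩ := hover o ho
  obtain ⟨b, hbo, hob⟩ := hT.exists_bottom hroot hto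
  obtain ⟨j, hjD, hbj⟩ := hDcov b (mem_filter.mpr ⟨hbo _ hto, o, ho, hbo⟩)
  exact ⟨j, hjD, hob (S j) (hsub j) (hlater j (hD hjD) b (hbo _ hto) hbj) hbj⟩

end Exchange

section Invariant

variable {V : Type} [DecidableEq V] {n : ℕ} {G : SimpleGraph V} {S : Fin n → Finset V}
  {k : Object V → ℕ}

theorem exists_feasible_inter_firstIdx_succ (hT : G.IsTree) {r : V}
    (hsub : ∀ i, (G.induce (S i : Set V)).Connected) {rt : Fin n → V}
    (hroot : ∀ i, ∀ v ∈ S i, G.Between r (rt i) v)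
    (hlater : ∀ t j : Fin n, t < j → ∀ x ∈ S t, x ∈ S j → rt t ∈ S j) {M : ℕ}
    (hM1 : ∀ i, 1 ≤ leavesCnt G (S i) (rt i)) (hM : ∀ i, leavesCnt G (S i) (rt i) ≤ M)
    {i : ℕ} (hi : i < n) {U : Finset (Fin n)} (hU : Feasible G S k U)
    (hcap : U ∩ firstIdx n i = greedy G S k i) :
    ∃ U', Feasible G S k U' ∧ U' ⊆ insert ⟨i, hi⟩ U ∧
      U' ∩ firstIdx n (i + 1) = greedy G S k (i + 1) ∧
      U.card + (M - 1) * (greedy G S k i).card ≤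
        U'.card + (M - 1) * (greedy G S k (i + 1)).card := by
  set t : Fin n := ⟨i, hi⟩
  have htF : t ∉ firstIdx n i := by simp [t, mem_firstIdx]
  rw [firstIdx_succ hi, greedy_succ_of_lt hi, ← hcap]
  by_cases hF : Feasible G S k (insert t (U ∩ firstIdx n i))
  · rw [if_pos hF, card_insert_of_notMem fun h => htF (mem_inter.mp h).2, mul_add, mul_one]
    by_cases htU : t ∈ U
    · exact ⟨U, hU, subset_insert t U, inter_insert_of_mem htU, by omega⟩
    have hlater' : ∀ j ∈ U \ (U ∩ firstIdx n i), ∀ x ∈ S t, x ∈ S j → rt t ∈ S j := by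
      intro j hj
      refine hlater t j ?_
      simp only [mem_sdiff, mem_inter, mem_firstIdx, not_and, not_lt] at hj
      exact lt_of_le_of_ne (hj.2 hj.1) fun h => htU (h ▸ hj.1)
    obtain ⟨D, hD, hDcard, hfeas⟩ := exists_feasible_exchange hT hsub (hroot t) (hM1 t) hU
      inter_subset_left htU hF hlater'
    refine ⟨insert t (U \ D), hfeas, insert_subset_insert t sdiff_subset, ?_, ?_⟩
    · rw [← insert_inter_distrib]
      congr 1
      ext j
      have := @hD j
      simp only [mem_inter, mem_sdiff] at this ⊢
      tauto
    · have := card_sdiff_of_subset (hD.trans sdiff_subset)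
      have := card_le_card (hD.trans sdiff_subset)
      have := hM1 t
      have := hM t
      rw [card_insert_of_notMem fun h => htU (mem_sdiff.mp h).1]
      omega
  · have htU : t ∉ U := fun htU => hF (hU.mono (insert_subset htU inter_subset_left))
    rw [if_neg hF]
    exact ⟨U, hU, subset_insert t U, inter_insert_of_notMem htU, le_rfl⟩

end Invariant

theorem statement0_general
    {V : Type} [DecidableEq V] (G : SimpleGraph V)
    (hTree : G.IsTree) (r : V)
    {n : ℕ} (S : Fin n → Finset V)
    -- each `S i` is (the vertex set of) a subtree, i.e. a connected subgraph of `G`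
    (hsub : ∀ i, (G.induce (S i : Set V)).Connected)
    -- `rt i` is the vertex of the subtree `S i` closest to the root `r`
    (rt : Fin n → V) (hrtmem : ∀ i, rt i ∈ S i)
    (hrtmin : ∀ i, ∀ v ∈ S i, G.dist r (rt i) ≤ G.dist r v)
    -- `pos` is a post-order (bottom-up) traversal of the tree ...
    (pos : V → ℕ) (hposinj : Function.Injective pos)
    (hpost : ∀ u v : V, IsAnc G r v u → pos u ≤ pos v)
    -- ... along which the roots of the subtrees appear in nondecreasing order
    (hord : ∀ i j : Fin n, i ≤ j → pos (rt i) ≤ pos (rt j))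
    (k : Object V → ℕ)
    -- every subtree has at least one leaf other than its root, and `M` bounds these numbers
    (M : ℕ) (hM1 : ∀ i, 1 ≤ leavesCnt G (S i) (rt i))
    (hM : ∀ i, leavesCnt G (S i) (rt i) ≤ M)
    -- `OPT` is a feasible subset of maximum cardinality
    (OPT : Finset (Fin n)) (hOPTfeas : Feasible G S k OPT) :
    ∃ Sq : ℕ → Finset (Fin n),
      (∀ i ≤ n, Feasible G S k (Sq i)) ∧
      (∀ i ≤ n, Sq i \ firstIdx n i ⊆ OPT) ∧
      (∀ i ≤ n, OPT.card - (Sq i).card ≤ (M - 1) * (greedy G S k i).card) ∧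
      (∀ i ≤ n, Sq i ∩ firstIdx n i = greedy G S k i) := by
  have hroot : ∀ i, ∀ v ∈ S i, G.Between r (rt i) v := fun i _ hv =>
    hTree.between_of_forall_dist_le (hsub i) (hrtmem i) (hrtmin i) hv
  -- a later tree meeting an earlier one contains its root, as roots come in post-order
  have hlater : ∀ t j : Fin n, t < j → ∀ x ∈ S t, x ∈ S j → rt t ∈ S j :=
    fun t j htj _ hxt hxj => hTree.root_mem_of_mem_inter (hsub j) (hrtmem j) (hroot t) (hroot j)
      (fun h => hposinj ((hord t j htj.le).antisymm (hpost _ _ h.symm))) hxt hxj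
  have hinv : ∀ i, ∃ U : Finset (Fin n), i ≤ n → Feasible G S k U ∧ U \ firstIdx n i ⊆ OPT ∧
      OPT.card ≤ U.card + (M - 1) * (greedy G S k i).card ∧ U ∩ firstIdx n i = greedy G S k i := by
    intro i
    induction i with
    | zero =>
      refine ⟨OPT, fun _ => ⟨hOPTfeas, ?_, ?_, ?_⟩⟩ <;> simp [firstIdx_zero, greedy_zero]
    | succ i ih =>
      obtain ⟨U, hU⟩ := ih
      by_cases hi : i < n
      · obtain ⟨hfeas, hopt, hcard, hcap⟩ := hU hi.le
        obtain ⟨U', hfeas', hU'U, hcap', hcard'⟩ :=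
          exists_feasible_inter_firstIdx_succ hTree hsub hroot hlater hM1 hM hi hfeas hcap
        exact ⟨U', fun _ =>
          ⟨hfeas', (sdiff_firstIdx_succ_subset hi hU'U).trans hopt, by omega, hcap'⟩⟩
      · exact ⟨∅, fun h => absurd h (by omega)⟩
  choose Sq hSq using hinv
  refine ⟨Sq, fun i hi => (hSq i hi).1, fun i hi => (hSq i hi).2.1, fun i hi => ?_,
    fun i hi => (hSq i hi).2.2.2⟩
  have := (hSq i hi).2.2.1
  omega

/-- **Lemma (sequence `S_0, …, S_n`).** There is a sequence of feasible subsets `Sq i`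
with `Sq i \ 𝒯_i ⊆ OPT`, `|OPT| - |Sq i| ≤ (M-1)·|ALG_i|` and `Sq i ∩ 𝒯_i = ALG_i`. -/
theorem statement0
    {V : Type} [Fintype V] [DecidableEq V] (G : SimpleGraph V)
    (hTree : G.IsTree) (r : V)
    {n : ℕ} (S : Fin n → Finset V)
    -- each `S i` is (the vertex set of) a subtree, i.e. a connected subgraph of `G`
    (hsub : ∀ i, (G.induce (S i : Set V)).Connected)
    -- `rt i` is the vertex of the subtree `S i` closest to the root `r`
    (rt : Fin n → V) (hrtmem : ∀ i, rt i ∈ S i)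
    (hrtmin : ∀ i, ∀ v ∈ S i, G.dist r (rt i) ≤ G.dist r v)
    -- `pos` is a post-order (bottom-up) traversal of the tree ...
    (pos : V → ℕ) (hposinj : Function.Injective pos)
    (hpost : ∀ u v : V, IsAnc G r v u → pos u ≤ pos v)
    (hcontig : ∀ u x v : V, IsAnc G r v u → pos u ≤ pos x → pos x ≤ pos v → IsAnc G r v x)
    -- ... along which the roots of the subtrees appear in nondecreasing order
    (hord : ∀ i j : Fin n, i ≤ j → pos (rt i) ≤ pos (rt j))
    (k : Object V → ℕ)
    -- every subtree has at least one leaf other than its root, and `M` bounds these numbers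
    (M : ℕ) (hM1 : ∀ i, 1 ≤ leavesCnt G (S i) (rt i))
    (hM : ∀ i, leavesCnt G (S i) (rt i) ≤ M)
    -- `OPT` is a feasible subset of maximum cardinality
    (OPT : Finset (Fin n)) (hOPTfeas : Feasible G S k OPT)
    (hOPTmax : ∀ U : Finset (Fin n), Feasible G S k U → U.card ≤ OPT.card) :
    ∃ Sq : ℕ → Finset (Fin n),
      (∀ i ≤ n, Feasible G S k (Sq i)) ∧
      (∀ i ≤ n, Sq i \ firstIdx n i ⊆ OPT) ∧
      (∀ i ≤ n, OPT.card - (Sq i).card ≤ (M - 1) * (greedy G S k i).card) ∧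
      (∀ i ≤ n, Sq i ∩ firstIdx n i = greedy G S k i) :=
  statement0_general G hTree r S hsub rt hrtmem hrtmin pos hposinj hpost hord k M hM1 hM OPT
    hOPTfeas
end

section
/- For every subset S ⊆ V(G): S is an independent set of G if and only if, for every object o of T other than the center c (i.e., for every leaf of T and every edge of T), the number of vertices v ∈ S with o ∈ T_v is at most 1. Equivalently, S is independent in G if and only if the sub-stars T_v, v ∈ S, induce load at most 1 on every object of T except its center; in particular, G has an independent set of size s if and only if there are s vertices whose sub-stars form a feasible solution for the capacities k_c = ∞ and k_o = 1 for every other object o. -/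
/-!
Given a finite simple graph `G` with at least one edge, construct the star `T`
with center `c` and one leaf `ℓ_e` for every edge `e ∈ E(G)`. For every vertex
`v` of `G`, the sub-star `T_v` consists of the center together with the leaves
`ℓ_e` (and the edges `c ℓ_e`) for the edges `e` incident to `v`. Objects of `T`
are its vertices and edges; the load induced by a set `S ⊆ V(G)` on an object
`o` is the number of `v ∈ S` whose sub-star contains `o`.
-/

open Finset

attribute [local instance] Classical.propDecidable

variable {V : Type} [Fintype V] [DecidableEq V]

/-- Vertex type of the star `T`: the center (`Sum.inl ()`) and one leaf per edge of `G`. -/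
abbrev StarV (G : SimpleGraph V) := Unit ⊕ {e : Sym2 V // e ∈ G.edgeSet}

/-- The center of the star. -/
def starCenter (G : SimpleGraph V) : StarV G := Sum.inl ()

/-- The star `T`: the center is adjacent to every leaf. -/
def starT (G : SimpleGraph V) : SimpleGraph (StarV G) where
  Adj a b := a ≠ b ∧ (a = Sum.inl () ∨ b = Sum.inl ())
  symm := by
    constructor
    intro a b h
    exact ⟨h.1.symm, h.2.symm⟩
  loopless := by
    constructor
    intro a h
    exact h.1 rfl

/-- The vertex set of the sub-star `T_v`: the center together with the leaves `ℓ_e`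
for the edges `e` of `G` incident to `v`. -/
def substar (G : SimpleGraph V) (v : V) : Set (StarV G) :=
  {w | w = starCenter G ∨ ∃ e : {e : Sym2 V // e ∈ G.edgeSet}, w = Sum.inr e ∧ v ∈ e.val}

/-- The sub-star `T_v` contains the object `o` of the star `T` (a vertex or an edge). -/
def SubstarContains (G : SimpleGraph V) (v : V) : StarV G ⊕ Sym2 (StarV G) → Prop
  | Sum.inl w => w ∈ substar G v
  | Sum.inr f => f ∈ (starT G).edgeSet ∧ ∀ x ∈ f, x ∈ substar G v

/-! Off the center, an object of `T` lying in some sub-star is a leaf `ℓ_e` or a spoke `c ℓ_e`,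
and it lies in `T_v` exactly when `v ∈ e`. Load at most 1 on it therefore says that `S` contains
at most one end of `e`, which for all edges `e` is independence of `S`. -/

omit [Fintype V] [DecidableEq V] in
lemma mem_substar_inr {G : SimpleGraph V} {v : V} {e : G.edgeSet} :
    (Sum.inr e : StarV G) ∈ substar G v ↔ v ∈ e.val := by
  simp [substar, starCenter]

omit [Fintype V] [DecidableEq V] in
lemma exists_eq_spoke_of_mem_edgeSet {G : SimpleGraph V} {f : Sym2 (StarV G)}
    (hf : f ∈ (starT G).edgeSet) : ∃ e : G.edgeSet, f = s(starCenter G, Sum.inr e) := by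
  induction f using Sym2.ind with
  | _ x y =>
    obtain ⟨hxy, hx | hy⟩ := hf
    · subst hx
      rcases y with ⟨⟩ | e
      · exact absurd rfl hxy
      · exact ⟨e, rfl⟩
    · subst hy
      rcases x with ⟨⟩ | e
      · exact absurd rfl hxy
      · exact ⟨e, Sym2.eq_swap⟩

omit [Fintype V] [DecidableEq V] in
lemma substarContains_spoke {G : SimpleGraph V} {v : V} {e : G.edgeSet} :
    SubstarContains G v (Sum.inr s(starCenter G, Sum.inr e)) ↔ v ∈ e.val := by
  have hT : s(starCenter G, Sum.inr e) ∈ (starT G).edgeSet :=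
    ⟨by simp [starCenter], Or.inl rfl⟩
  simp only [SubstarContains, hT, true_and, Sym2.mem_iff, forall_eq_or_imp, forall_eq]
  exact ⟨fun h => mem_substar_inr.mp h.2, fun h => ⟨Or.inl rfl, mem_substar_inr.mpr h⟩⟩

omit [Fintype V] [DecidableEq V] in
lemma exists_edge_substarContains_iff {G : SimpleGraph V} {o : StarV G ⊕ Sym2 (StarV G)}
    (ho : o ≠ Sum.inl (starCenter G)) {v : V} (hv : SubstarContains G v o) :
    ∃ e : G.edgeSet, ∀ u, SubstarContains G u o ↔ u ∈ e.val := by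
  rcases o with (⟨⟩ | e) | f
  · exact absurd rfl ho
  · exact ⟨e, fun u => mem_substar_inr⟩
  · obtain ⟨e, rfl⟩ := exists_eq_spoke_of_mem_edgeSet hv.1
    exact ⟨e, fun u => substarContains_spoke⟩

omit [Fintype V] in
lemma card_filter_mem_edge_le_one {G : SimpleGraph V} {S : Finset V}
    (hS : ∀ u ∈ S, ∀ w ∈ S, ¬ G.Adj u w) (e : G.edgeSet) :
    (S.filter (· ∈ e.val)).card ≤ 1 := by
  refine card_le_one.mpr fun u hu w hw => ?_
  rw [mem_filter] at hu hw
  by_contra huw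
  have he : e.val = s(u, w) := (Sym2.mem_and_mem_iff huw).mp ⟨hu.2, hw.2⟩
  exact hS u hu.1 w hw.1 (G.mem_edgeSet.mp (he ▸ e.2))

omit [Fintype V] in
lemma indep_iff_load_le_one (G : SimpleGraph V) (S : Finset V) :
    (∀ u ∈ S, ∀ w ∈ S, ¬ G.Adj u w) ↔
      ∀ o : StarV G ⊕ Sym2 (StarV G), o ≠ Sum.inl (starCenter G) →
        (S.filter fun v => SubstarContains G v o).card ≤ 1 := by
  constructor
  · intro hS o ho
    rcases (S.filter fun v => SubstarContains G v o).eq_empty_or_nonempty with h | ⟨v, hv⟩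
    · simp [h]
    obtain ⟨e, he⟩ := exists_edge_substarContains_iff ho (mem_filter.mp hv).2
    simpa only [he] using card_filter_mem_edge_le_one hS e
  · intro hload u hu w hw huw
    let leaf : StarV G ⊕ Sym2 (StarV G) := Sum.inl (Sum.inr ⟨s(u, w), huw⟩)
    have hu' : u ∈ S.filter fun v => SubstarContains G v leaf :=
      mem_filter.mpr ⟨hu, mem_substar_inr.mpr (Sym2.mem_mk_left _ _)⟩
    have hw' : w ∈ S.filter fun v => SubstarContains G v leaf :=
      mem_filter.mpr ⟨hw, mem_substar_inr.mpr (Sym2.mem_mk_right _ _)⟩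
    have hcard := hload leaf (by simp [leaf, starCenter])
    exact hcard.not_gt (one_lt_card.mpr ⟨u, hu', w, hw', G.ne_of_adj huw⟩)

theorem statement5_general (G : SimpleGraph V) :
    (∀ S : Finset V,
      ((∀ u ∈ S, ∀ w ∈ S, ¬ G.Adj u w) ↔
        ∀ o : StarV G ⊕ Sym2 (StarV G), o ≠ Sum.inl (starCenter G) →
          (S.filter fun v => SubstarContains G v o).card ≤ 1)) ∧
    (∀ s : ℕ,
      (∃ S : Finset V, S.card = s ∧ ∀ u ∈ S, ∀ w ∈ S, ¬ G.Adj u w) ↔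
      (∃ S : Finset V, S.card = s ∧
        ∀ o : StarV G ⊕ Sym2 (StarV G), o ≠ Sum.inl (starCenter G) →
          (S.filter fun v => SubstarContains G v o).card ≤ 1)) :=
  ⟨indep_iff_load_le_one G, fun _ => exists_congr fun S => and_congr_right fun _ =>
    indep_iff_load_le_one G S⟩

/-- **Independent sets and feasible sub-star families.** A set `S ⊆ V(G)` is
independent in `G` iff the sub-stars `T_v`, `v ∈ S`, induce load at most 1 on every
object of the star `T` other than its center. In particular `G` has an independent
set of size `s` iff there are `s` vertices whose sub-stars form a feasible solution
for the capacities `k_c = ∞` and `k_o = 1` for every other object `o`. -/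
theorem statement5 (G : SimpleGraph V) (hE : ∃ u v : V, G.Adj u v) :
    (∀ S : Finset V,
      ((∀ u ∈ S, ∀ w ∈ S, ¬ G.Adj u w) ↔
        ∀ o : StarV G ⊕ Sym2 (StarV G), o ≠ Sum.inl (starCenter G) →
          (S.filter fun v => SubstarContains G v o).card ≤ 1)) ∧
    (∀ s : ℕ,
      (∃ S : Finset V, S.card = s ∧ ∀ u ∈ S, ∀ w ∈ S, ¬ G.Adj u w) ↔
      (∃ S : Finset V, S.card = s ∧
        ∀ o : StarV G ⊕ Sym2 (StarV G), o ≠ Sum.inl (starCenter G) →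
          (S.filter fun v => SubstarContains G v o).card ≤ 1)) :=
  statement5_general G
end

section
/- Let P be a path of T with both endpoints at leaves of T that contains r as an internal vertex, and let v ≠ r be a vertex of T. Then the following are equivalent: (1) P contains the vertex v; (2) P contains the edge e_v; (3) P has exactly one endpoint in L_v. In particular, P cannot have both endpoints in L_v. -/
/-!
`G` is a finite tree rooted at `r`. For `v ≠ r`, the parent of `v` is its unique
neighbour on the path towards `r`, and `e_v` is the edge between `v` and its parent.
`L_v` is the set of leaves of the tree that are descendants of `v`, where "`v` is an
ancestor of `u`" is expressed by `dist r u = dist r v + dist v u` (i.e. `v` lies on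
the unique `r`–`u` path). A vertex is an internal vertex of a path if it lies on the
path and is not one of its endpoints.
-/

open Finset

attribute [local instance] Classical.propDecidable

/-- `L_v`: the set of leaves of the tree `G` that are descendants of `v`. -/
def leafDesc {V : Type} [Fintype V] [DecidableEq V] (G : SimpleGraph V) (r v : V) :
    Set V :=
  {ℓ | G.degree ℓ = 1 ∧ IsAnc G r v ℓ}

/-!
In a tree, a vertex `v` lies on the path between `x` and `y` iff it is metrically between them:
`dist x y = dist x v + dist v y`. Splitting `P` at `r`, the vertex `v` lies on `P` iff it lies on
the `r`–`a` or the `r`–`b` path, i.e. iff it is an ancestor of `a` or of `b`. It cannot be both,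
since `r` lies between `a` and `b` and `v ≠ r`: the triangle inequality then forces
`dist r v = 0`. Finally the parent `p` is an ancestor of `v`, so `p` lies on `P` with `v`, and a
path in an acyclic graph through two adjacent vertices uses the edge between them.
-/

namespace SimpleGraph

variable {V : Type} {G : SimpleGraph V}

lemma IsAcyclic.length_eq_dist (hG : G.IsAcyclic) {x y : V} {Q : G.Walk x y} (hQ : Q.IsPath) :
    Q.length = G.dist x y := by
  obtain ⟨Q', hQ', hlen⟩ := Q.reachable.exists_path_of_dist
  rw [← hlen, Subtype.mk.inj <| hG.subsingleton_path x y |>.elim ⟨Q, hQ⟩ ⟨Q', hQ'⟩]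

lemma IsTree.mem_support_iff_dist_eq_add (hG : G.IsTree) {x y : V} {Q : G.Walk x y}
    (hQ : Q.IsPath) (v : V) : v ∈ Q.support ↔ G.dist x y = G.dist x v + G.dist v y := by
  constructor
  · intro hv
    have hQlen := hG.isAcyclic.length_eq_dist hQ
    rw [← Q.take_spec hv, Walk.length_append] at hQlen
    have := G.dist_le (Q.takeUntil v hv)
    have := G.dist_le (Q.dropUntil v hv)
    have := hG.connected.dist_triangle (u := x) (v := v) (w := y)
    omega
  · intro h
    obtain ⟨Q₁, -, hQ₁⟩ := hG.connected.exists_path_of_dist x v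
    obtain ⟨Q₂, -, hQ₂⟩ := hG.connected.exists_path_of_dist v y
    have hpath : (Q₁.append Q₂).IsPath :=
      Walk.isPath_of_length_eq_dist _ (by rw [Walk.length_append, hQ₁, hQ₂, h])
    rw [Subtype.mk.inj <| hG.isAcyclic.subsingleton_path x y |>.elim ⟨Q, hQ⟩ ⟨_, hpath⟩]
    exact (Walk.mem_support_append_iff _ _).2 (Or.inl Q₁.end_mem_support)

lemma IsAcyclic.mem_edges_of_adj (hG : G.IsAcyclic) {x y u w : V} {Q : G.Walk x y}
    (hQ : Q.IsPath) (hu : u ∈ Q.support) (hw : w ∈ Q.support) (huw : G.Adj u w) :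
    s(u, w) ∈ Q.edges := by
  rw [← Q.take_spec hu, Walk.mem_support_append_iff] at hw
  rcases hw with hw | hw
  · have hseg : (Q.takeUntil u hu |>.dropUntil w hw) = (Path.singleton huw.symm : G.Walk w u) :=
      Subtype.mk.inj <| hG.subsingleton_path w u |>.elim
        ⟨_, (hQ.takeUntil hu).dropUntil hw⟩ (Path.singleton huw.symm)
    have := Path.mk'_mem_edges_singleton huw.symm
    rw [← hseg, Sym2.eq_swap] at this
    exact Q.edges_takeUntil_subset_edges hu (Walk.edges_dropUntil_subset_edges _ hw this)
  · have hseg : (Q.dropUntil u hu |>.takeUntil w hw) = (Path.singleton huw : G.Walk u w) :=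
      Subtype.mk.inj <| hG.subsingleton_path u w |>.elim
        ⟨_, (hQ.dropUntil hu).takeUntil hw⟩ (Path.singleton huw)
    have := Path.mk'_mem_edges_singleton huw
    rw [← hseg] at this
    exact Q.edges_dropUntil_subset_edges hu (Walk.edges_takeUntil_subset_edges _ hw this)

end SimpleGraph

open SimpleGraph

section IsAnc

variable {V : Type} {G : SimpleGraph V}

lemma IsAnc.trans (hG : G.Connected) {r u v w : V} (huv : IsAnc G r u v) (hvw : IsAnc G r v w) :
    IsAnc G r u w := by
  unfold IsAnc at *
  have := hG.dist_triangle (u := r) (v := u) (w := w)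
  have := hG.dist_triangle (u := u) (v := v) (w := w)
  omega

lemma isAnc_of_adj_of_dist_add_one {r u v : V} (hadj : G.Adj v u)
    (hu : G.dist r u + 1 = G.dist r v) : IsAnc G r u v := by
  rw [IsAnc, dist_eq_one_iff_adj.2 hadj.symm, hu]

lemma IsAnc.eq_root_of_isAnc (hG : G.Connected) {r v a b : V}
    (hr : G.dist a b = G.dist a r + G.dist r b) (ha : IsAnc G r v a) (hb : IsAnc G r v b) :
    v = r := by
  unfold IsAnc at ha hb
  have := hG.dist_triangle (u := a) (v := v) (w := b)
  have := G.dist_comm (u := a) (v := v)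
  have := G.dist_comm (u := a) (v := r)
  exact (hG.dist_eq_zero_iff.1 (by omega)).symm

lemma SimpleGraph.IsTree.mem_support_iff_isAnc_or_isAnc (hG : G.IsTree) {r a b : V}
    {P : G.Walk a b} (hP : P.IsPath) (hr : r ∈ P.support) (v : V) :
    v ∈ P.support ↔ IsAnc G r v a ∨ IsAnc G r v b := by
  rw [← P.take_spec hr, Walk.mem_support_append_iff, ← List.mem_reverse, ← Walk.support_reverse]
  exact or_congr (hG.mem_support_iff_dist_eq_add (hP.takeUntil hr).reverse v)
    (hG.mem_support_iff_dist_eq_add (hP.dropUntil hr) v)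

end IsAnc

theorem statement9_general
    {V : Type} [Fintype V] [DecidableEq V]
    (G : SimpleGraph V) (hTree : G.IsTree) (r : V)
    -- `P` is a path between the leaves `a` and `b` ...
    {a b : V} (P : G.Walk a b) (hP : P.IsPath)
    (ha : G.degree a = 1) (hb : G.degree b = 1)
    -- ... containing `r` as an internal vertex
    (hr : r ∈ P.support)
    -- `v ≠ r`, and `p` is the parent of `v` (its neighbour closer to the root)
    (v : V) (hv : v ≠ r)
    (p : V) (hadj : G.Adj v p) (hp : G.dist r p + 1 = G.dist r v) :
    ((v ∈ P.support) ↔ s(v, p) ∈ P.edges) ∧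
    ((v ∈ P.support) ↔
      ((a ∈ leafDesc G r v ∧ b ∉ leafDesc G r v) ∨
       (b ∈ leafDesc G r v ∧ a ∉ leafDesc G r v))) ∧
    ¬(a ∈ leafDesc G r v ∧ b ∈ leafDesc G r v) := by
  have hmem := hTree.mem_support_iff_isAnc_or_isAnc hP hr
  have hr_between := (hTree.mem_support_iff_dist_eq_add hP r).1 hr
  have hnot_both : ¬(IsAnc G r v a ∧ IsAnc G r v b) := fun ⟨hva, hvb⟩ =>
    hv <| IsAnc.eq_root_of_isAnc hTree.connected hr_between hva hvb
  have hleaf_a : a ∈ leafDesc G r v ↔ IsAnc G r v a := and_iff_right ha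
  have hleaf_b : b ∈ leafDesc G r v ↔ IsAnc G r v b := and_iff_right hb
  rw [hleaf_a, hleaf_b]
  refine ⟨⟨fun hvP => ?_, P.fst_mem_support_of_mem_edges⟩, by rw [hmem]; tauto, hnot_both⟩
  have hpv := isAnc_of_adj_of_dist_add_one hadj hp
  have hpP : p ∈ P.support :=
    (hmem p).2 (((hmem v).1 hvP).imp (hpv.trans hTree.connected) (hpv.trans hTree.connected))
  exact hTree.isAcyclic.mem_edges_of_adj hP hvP hpP hadj

/-- **Lemma.** Let `P` be a path of the tree with both endpoints at leaves that
contains the root `r` as an internal vertex, and let `v ≠ r`. Then the following are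
equivalent: (1) `P` contains `v`; (2) `P` contains the edge `e_v` between `v` and its
parent; (3) `P` has exactly one endpoint in `L_v`. In particular `P` cannot have both
endpoints in `L_v`. -/
theorem statement9
    {V : Type} [Fintype V] [DecidableEq V]
    (G : SimpleGraph V) (hTree : G.IsTree) (r : V)
    -- `P` is a path between the leaves `a` and `b` ...
    {a b : V} (P : G.Walk a b) (hP : P.IsPath)
    (ha : G.degree a = 1) (hb : G.degree b = 1)
    -- ... containing `r` as an internal vertex
    (hr : r ∈ P.support) (hra : r ≠ a) (hrb : r ≠ b)
    -- `v ≠ r`, and `p` is the parent of `v` (its neighbour closer to the root)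
    (v : V) (hv : v ≠ r)
    (p : V) (hadj : G.Adj v p) (hp : G.dist r p + 1 = G.dist r v) :
    ((v ∈ P.support) ↔ s(v, p) ∈ P.edges) ∧
    ((v ∈ P.support) ↔
      ((a ∈ leafDesc G r v ∧ b ∉ leafDesc G r v) ∨
       (b ∈ leafDesc G r v ∧ a ∉ leafDesc G r v))) ∧
    ¬(a ∈ leafDesc G r v ∧ b ∈ leafDesc G r v) :=
  statement9_general G hTree r P hP ha hb hr v hv p hadj hp
end
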